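/- Let γ>1, C>0, let α : ℕ → ℂ satisfy |α_n| < 1 and |α_n| ≤ C·exp(−n^γ) for all n ≥ 1, and let F be a Jost solution for α. Set ρ_k = √(1−|α_k|²), C_k = ∏_{j=k+1}^∞ ρ_j^{−1} (convergent by the decay assumption), σ = the 2×2 matrix [[0,1],[1,0]], and for z ≠ 0 define ν(z,k) = 2·z^{⌈k/2⌉}·C_k·σ^{k+1}·F(z,k) ∈ ℂ². Then ν satisfies the CMV equations: for every z ∈ ℂ∖{0} and every k ≥ 1, ν(z,k) = T(z,k)·ν(z,k−1). -/

import Mathlib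

open Complex Filter
open scoped ComplexConjugate Topology

noncomputable section

def cmvZeta (n : ℕ) (z : ℂ) : ℂ := if Odd n then z else 1

def enorm2 (v : ℂ × ℂ) : ℝ := Real.sqrt (‖v.1‖ ^ 2 + ‖v.2‖ ^ 2)

def IsJostSolution (α : ℕ → ℂ) (F : ℂ → ℕ → ℂ × ℂ) : Prop :=
  (∀ z : ℂ, ∃ M : ℝ, ∀ k : ℕ, enorm2 (F z k) ≤ M) ∧
  ∀ (z : ℂ) (k : ℕ),
    Summable (fun n : ℕ => ‖α (k + 1 + n) * cmvZeta (k + 1 + n) z * (F z (k + 1 + n)).2‖) ∧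
    Summable (fun n : ℕ => ‖z ^ n * conj (α (k + 1 + n)) * cmvZeta (k + 1) z * (F z (k + 1 + n)).1‖) ∧
    (F z k).1 = 1 - ∑' n : ℕ, α (k + 1 + n) * cmvZeta (k + 1 + n) z * (F z (k + 1 + n)).2 ∧
    (F z k).2 = - ∑' n : ℕ, z ^ n * conj (α (k + 1 + n)) * cmvZeta (k + 1) z * (F z (k + 1 + n)).1

def SuperExpDecay (γ C : ℝ) (α : ℕ → ℂ) : Prop :=
  ∀ n : ℕ, 1 ≤ n → ‖α n‖ ≤ C * Real.exp (-(n : ℝ) ^ γ)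

def MemB0 (γ C Q : ℝ) (α : ℕ → ℂ) : Prop :=
  (∀ k : ℕ, 1 ≤ k → ‖α k‖ < 1) ∧
  SuperExpDecay γ C α ∧
  1 / Q ≤ ∏' j : ℕ, (1 - ‖α (j + 1)‖)

def jostPi (F : ℂ → ℕ → ℂ × ℂ) (z : ℂ) : ℂ := (F z 0).1 - (F z 0).2

def HasZeroOrder (f : ℂ → ℂ) (w : ℂ) (m : ℕ) : Prop :=
  ∃ g : ℂ → ℂ, AnalyticAt ℂ g w ∧ g w ≠ 0 ∧ ∀ᶠ x in 𝓝 w, f x = (x - w) ^ m * g x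

def CMVStep (α : ℕ → ℂ) (z : ℂ) (k : ℕ) (prev cur : ℂ × ℂ) : Prop :=
  if Odd k then
    cur.1 = (α k * prev.1 + z * prev.2) / ((Real.sqrt (1 - ‖α k‖ ^ 2) : ℝ) : ℂ) ∧
    cur.2 = (prev.1 / z + conj (α k) * prev.2) / ((Real.sqrt (1 - ‖α k‖ ^ 2) : ℝ) : ℂ)
  else
    cur.1 = (conj (α k) * prev.1 + prev.2) / ((Real.sqrt (1 - ‖α k‖ ^ 2) : ℝ) : ℂ) ∧
    cur.2 = (prev.1 + α k * prev.2) / ((Real.sqrt (1 - ‖α k‖ ^ 2) : ℝ) : ℂ)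

def nuSeq (α : ℕ → ℂ) (F : ℂ → ℕ → ℂ × ℂ) (z : ℂ) (k : ℕ) : ℂ × ℂ :=
  if Even k then
    ((2 * z ^ ((k + 1) / 2) * ((∏' j : ℕ, (Real.sqrt (1 - ‖α (k + 1 + j)‖ ^ 2))⁻¹ : ℝ) : ℂ)) * (F z k).2,
     (2 * z ^ ((k + 1) / 2) * ((∏' j : ℕ, (Real.sqrt (1 - ‖α (k + 1 + j)‖ ^ 2))⁻¹ : ℝ) : ℂ)) * (F z k).1)
  else
    ((2 * z ^ ((k + 1) / 2) * ((∏' j : ℕ, (Real.sqrt (1 - ‖α (k + 1 + j)‖ ^ 2))⁻¹ : ℝ) : ℂ)) * (F z k).1,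
     (2 * z ^ ((k + 1) / 2) * ((∏' j : ℕ, (Real.sqrt (1 - ‖α (k + 1 + j)‖ ^ 2))⁻¹ : ℝ) : ℂ)) * (F z k).2)

end

/-!
Dropping the first term of each series in the definition of a Jost solution gives a one-step
recursion between `F(z, k)` and `F(z, k + 1)`; thanks to `ζ_{k+1}(z) ζ_{k+2}(z) = z` it needs no
division. Dropping the first factor of `C_k` gives `C_k = ρ_{k+1}⁻¹ C_{k+1}`, and
`z^⌈(k+1)/2⌉ = ζ_{k+1}(z) z^⌈k/2⌉`. Substituting both, each CMV equation reduces to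
`ρ_k² = 1 - |α_k|²`. The decay of `α` is needed only to make the products `C_k` converge.
-/

theorem cmvZeta_mul_cmvZeta_succ (n : ℕ) (z : ℂ) : cmvZeta n z * cmvZeta (n + 1) z = z := by
  rcases Nat.even_or_odd n with hn | hn
  · simp [cmvZeta, Nat.not_odd_iff_even.2 hn, hn.add_one]
  · simp [cmvZeta, hn, Nat.not_odd_iff_even.2 hn.add_one]

theorem pow_succ_div_two_eq_cmvZeta_mul (n : ℕ) (z : ℂ) :
    z ^ ((n + 1) / 2) = cmvZeta n z * z ^ (n / 2) := by
  rcases Nat.even_or_odd' n with ⟨t, rfl | rfl⟩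
  · simp [cmvZeta, Nat.not_odd_iff_even.2 (even_two_mul t), show (2 * t + 1) / 2 = t by omega]
  · rw [show (2 * t + 1 + 1) / 2 = t + 1 by omega, show (2 * t + 1) / 2 = t by omega]
    simp [cmvZeta, pow_succ, mul_comm]

theorem cmvZeta_of_odd {n : ℕ} (hn : Odd n) (z : ℂ) : cmvZeta n z = z := if_pos hn

theorem cmvZeta_of_even {n : ℕ} (hn : Even n) (z : ℂ) : cmvZeta n z = 1 :=
  if_neg (Nat.not_odd_iff_even.2 hn)

theorem multipliable_inv_sqrt_one_sub {ι : Type*} {a : ι → ℝ} (ha : ∀ i, a i < 1)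
    (hs : Summable a) : Multipliable fun i => (Real.sqrt (1 - a i))⁻¹ := by
  refine Real.multipliable_of_summable_log (fun i => by have := ha i; positivity) ?_
  have hlog : ∀ i, Real.log (Real.sqrt (1 - a i))⁻¹ = -(Real.log (1 + -a i) / 2) := fun i => by
    rw [Real.log_inv, Real.log_sqrt (by linarith [ha i]), sub_eq_add_neg]
  simpa only [hlog] using ((Real.summable_log_one_add_of_summable hs.neg).div_const 2).neg

namespace SuperExpDecay

variable {γ C : ℝ} {α : ℕ → ℂ}

theorem summable_norm (hα : SuperExpDecay γ C α) (hγ : 1 ≤ γ) : Summable fun n => ‖α n‖ := by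
  rw [← summable_nat_add_iff 1]
  refine (Real.summable_exp_neg_nat.mul_left C).of_norm_bounded fun n => ?_
  rw [norm_norm]
  have hn := hα (n + 1) (by omega)
  have hC : 0 ≤ C := nonneg_of_mul_nonneg_left ((norm_nonneg _).trans hn) (Real.exp_pos _)
  refine hn.trans (mul_le_mul_of_nonneg_left (Real.exp_le_exp.2 (neg_le_neg ?_)) hC)
  push_cast
  exact (le_add_of_nonneg_right zero_le_one).trans
    (Real.self_le_rpow_of_one_le (by linarith [n.cast_nonneg (α := ℝ)]) hγ)

theorem multipliable_tail (hα : SuperExpDecay γ C α) (hγ : 1 ≤ γ)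
    (hα1 : ∀ n : ℕ, 1 ≤ n → ‖α n‖ < 1) (k : ℕ) :
    Multipliable fun j => (Real.sqrt (1 - ‖α (k + 1 + j)‖ ^ 2))⁻¹ := by
  have hlt : ∀ j, ‖α (k + 1 + j)‖ < 1 := fun j => hα1 _ (by omega)
  refine multipliable_inv_sqrt_one_sub (fun j => pow_lt_one₀ (norm_nonneg _) (hlt j) two_ne_zero) ?_
  refine ((summable_nat_add_iff (k + 1)).2 (hα.summable_norm hγ)).of_nonneg_of_le
    (fun j => by positivity) fun j => ?_
  rw [add_comm j]
  exact pow_le_of_le_one (norm_nonneg _) (hlt j).le two_ne_zero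

end SuperExpDecay

namespace IsJostSolution

variable {α : ℕ → ℂ} {F : ℂ → ℕ → ℂ × ℂ}

theorem fst_eq (hF : IsJostSolution α F) (z : ℂ) (k : ℕ) :
    (F z k).1 = (F z (k + 1)).1 - α (k + 1) * cmvZeta (k + 1) z * (F z (k + 1)).2 := by
  obtain ⟨hs, -, hk, -⟩ := hF.2 z k
  rw [hk, (hF.2 z (k + 1)).2.2.1, (Summable.of_norm hs).tsum_eq_zero_add]
  ring_nf

theorem cmvZeta_mul_snd (hF : IsJostSolution α F) (z : ℂ) (k : ℕ) :
    cmvZeta (k + 2) z * (F z k).2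
      = -(z * conj (α (k + 1)) * (F z (k + 1)).1) + z * cmvZeta (k + 1) z * (F z (k + 1)).2 := by
  obtain ⟨-, hs, -, hk⟩ := hF.2 z k
  set S := ∑' n : ℕ, z ^ n * conj (α (k + 2 + n)) * (F z (k + 2 + n)).1
  have hnext : (F z (k + 1)).2 = -(cmvZeta (k + 2) z * S) := by
    rw [(hF.2 z (k + 1)).2.2.2, ← tsum_mul_left]
    congr 1
    exact tsum_congr fun n => by ring_nf
  have hcur : (F z k).2 = -(cmvZeta (k + 1) z * (conj (α (k + 1)) * (F z (k + 1)).1 + z * S)) := by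
    have htail : ∑' n : ℕ, z ^ (n + 1) * conj (α (k + 1 + (n + 1))) * cmvZeta (k + 1) z
        * (F z (k + 1 + (n + 1))).1 = cmvZeta (k + 1) z * (z * S) := by
      rw [← tsum_mul_left, ← tsum_mul_left]
      exact tsum_congr fun n => by ring_nf
    rw [hk, (Summable.of_norm hs).tsum_eq_zero_add, htail]
    ring
  have hζ : cmvZeta (k + 1) z * cmvZeta (k + 2) z = z := cmvZeta_mul_cmvZeta_succ (k + 1) z
  rw [hnext, hcur]
  linear_combination -(conj (α (k + 1)) * (F z (k + 1)).1) * hζ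

end IsJostSolution

/-- The scalar `2 z^⌈k/2⌉ C_k` of `nuSeq`, with `C_k = ∏_{j > k} ρ_j⁻¹`. -/
noncomputable def jostScale (α : ℕ → ℂ) (z : ℂ) (k : ℕ) : ℂ :=
  2 * z ^ ((k + 1) / 2) * ((∏' j : ℕ, (Real.sqrt (1 - ‖α (k + 1 + j)‖ ^ 2))⁻¹ : ℝ) : ℂ)

theorem nuSeq_of_even {α : ℕ → ℂ} {F : ℂ → ℕ → ℂ × ℂ} {z : ℂ} {k : ℕ} (hk : Even k) :
    nuSeq α F z k = (jostScale α z k * (F z k).2, jostScale α z k * (F z k).1) :=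
  if_pos hk

theorem nuSeq_of_odd {α : ℕ → ℂ} {F : ℂ → ℕ → ℂ × ℂ} {z : ℂ} {k : ℕ} (hk : Odd k) :
    nuSeq α F z k = (jostScale α z k * (F z k).1, jostScale α z k * (F z k).2) :=
  if_neg (Nat.not_even_iff_odd.2 hk)

theorem cmvZeta_mul_jostScale {α : ℕ → ℂ} (z : ℂ) (k : ℕ)
    (h : Multipliable fun j => (Real.sqrt (1 - ‖α (k + 1 + 1 + j)‖ ^ 2))⁻¹) :
    cmvZeta (k + 1) z * jostScale α z k
      = ((Real.sqrt (1 - ‖α (k + 1)‖ ^ 2))⁻¹ : ℝ) * jostScale α z (k + 1) := by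
  have hpeel : ∏' j : ℕ, (Real.sqrt (1 - ‖α (k + 1 + j)‖ ^ 2))⁻¹
      = (Real.sqrt (1 - ‖α (k + 1)‖ ^ 2))⁻¹
        * ∏' j : ℕ, (Real.sqrt (1 - ‖α (k + 1 + 1 + j)‖ ^ 2))⁻¹ := by
    have hshift : ∀ n, k + 1 + (n + 1) = k + 1 + 1 + n := fun n => by omega
    rw [tprod_eq_zero_mul' (h.congr fun n => by rw [hshift n]), add_zero]
    exact congrArg _ (tprod_congr fun n => by rw [hshift n])
  simp only [jostScale, hpeel, pow_succ_div_two_eq_cmvZeta_mul (k + 1), Complex.ofReal_mul]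
  ring

theorem ofReal_sqrt_one_sub_norm_sq_sq {a : ℂ} (ha : ‖a‖ ≤ 1) :
    ((Real.sqrt (1 - ‖a‖ ^ 2) : ℝ) : ℂ) ^ 2 = 1 - a * conj a := by
  rw [← Complex.ofReal_pow, Real.sq_sqrt (by nlinarith [norm_nonneg a]), Complex.mul_conj,
    Complex.normSq_eq_norm_sq]
  push_cast
  ring

theorem IsJostSolution.cmvStep_succ {α : ℕ → ℂ} {F : ℂ → ℕ → ℂ × ℂ} (hF : IsJostSolution α F)
    {z : ℂ} (hz : z ≠ 0) {m : ℕ} (hα : ‖α (m + 1)‖ < 1)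
    (hC : Multipliable fun j => (Real.sqrt (1 - ‖α (m + 1 + 1 + j)‖ ^ 2))⁻¹) :
    CMVStep α z (m + 1) (nuSeq α F z m) (nuSeq α F z (m + 1)) := by
  have hρ2 := ofReal_sqrt_one_sub_norm_sq_sq hα.le
  have hρ : ((Real.sqrt (1 - ‖α (m + 1)‖ ^ 2) : ℝ) : ℂ) ≠ 0 := by
    have : 0 < 1 - ‖α (m + 1)‖ ^ 2 := by nlinarith [norm_nonneg (α (m + 1))]
    exact_mod_cast (Real.sqrt_pos.2 this).ne'
  have hscale : jostScale α z (m + 1)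
      = Real.sqrt (1 - ‖α (m + 1)‖ ^ 2) * (cmvZeta (m + 1) z * jostScale α z m) := by
    rw [cmvZeta_mul_jostScale z m hC, Complex.ofReal_inv]
    field_simp
  have h₁ := hF.fst_eq z m
  have h₂ := hF.cmvZeta_mul_snd z m
  unfold CMVStep
  set ρ := Real.sqrt (1 - ‖α (m + 1)‖ ^ 2)
  rcases Nat.even_or_odd m with hm | hm
  · rw [if_pos hm.add_one, nuSeq_of_even hm, nuSeq_of_odd hm.add_one, hscale]
    rw [cmvZeta_of_odd hm.add_one] at h₁ h₂ ⊢
    rw [cmvZeta_of_even (hm.add even_two)] at h₂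
    constructor <;> field_simp
    · linear_combination (z * jostScale α z m * (F z (m + 1)).1) * hρ2
        - z * jostScale α z m * h₁ - α (m + 1) * jostScale α z m * h₂
    · linear_combination (z ^ 2 * jostScale α z m * (F z (m + 1)).2) * hρ2
        - z * conj (α (m + 1)) * jostScale α z m * h₁ - jostScale α z m * h₂
  · rw [if_neg (Nat.not_odd_iff_even.2 hm.add_one), nuSeq_of_odd hm, nuSeq_of_even hm.add_one,
      hscale]
    rw [cmvZeta_of_even hm.add_one] at h₁ h₂ ⊢
    rw [cmvZeta_of_odd (hm.add_even even_two)] at h₂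
    have h₂' : (F z m).2 = -(conj (α (m + 1)) * (F z (m + 1)).1) + (F z (m + 1)).2 :=
      mul_left_cancel₀ hz (by linear_combination h₂)
    constructor <;> field_simp
    · linear_combination jostScale α z m * (F z (m + 1)).2 * hρ2
        - conj (α (m + 1)) * jostScale α z m * h₁ - jostScale α z m * h₂'
    · linear_combination jostScale α z m * (F z (m + 1)).1 * hρ2
        - jostScale α z m * h₁ - α (m + 1) * jostScale α z m * h₂'

theorem jost_solution_satisfies_cmv_general (γ C : ℝ) (hγ : 1 < γ)
    (α : ℕ → ℂ) (hα : SuperExpDecay γ C α) (hα1 : ∀ n : ℕ, 1 ≤ n → ‖α n‖ < 1)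
    (F : ℂ → ℕ → ℂ × ℂ) (hF : IsJostSolution α F) :
    ∀ z : ℂ, z ≠ 0 → ∀ k : ℕ, 1 ≤ k →
      CMVStep α z k (nuSeq α F z (k - 1)) (nuSeq α F z k) := by
  intro z hz k hk
  obtain ⟨m, rfl⟩ := Nat.exists_eq_add_of_le' hk
  exact hF.cmvStep_succ hz (hα1 _ le_add_self) (hα.multipliable_tail hγ.le hα1 (m + 1))

theorem jost_solution_satisfies_cmv (γ C : ℝ) (hγ : 1 < γ) (hC : 0 < C)
    (α : ℕ → ℂ) (hα : SuperExpDecay γ C α) (hα1 : ∀ n : ℕ, 1 ≤ n → ‖α n‖ < 1)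
    (F : ℂ → ℕ → ℂ × ℂ) (hF : IsJostSolution α F) :
    ∀ z : ℂ, z ≠ 0 → ∀ k : ℕ, 1 ≤ k →
      CMVStep α z k (nuSeq α F z (k - 1)) (nuSeq α F z k) :=
  jost_solution_satisfies_cmv_general γ C hγ α hα hα1 F hF
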